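/- Let G be a connected graph that is not an isolated vertex nor a single edge, and let π be a layout of G of width at most k. For each i, let X_i = mid(π_{≤ i−1}) ∪ endpoints(π(i)). Then |X_i| ≤ k + 1 for every 1 ≤ i ≤ m. -/

import Mathlib

variable {V : Type*} [Fintype V] [DecidableEq V]

/-- `Vs F` is the set of endpoints of edges in `F`. -/
def Vs (F : Finset (Sym2 V)) : Finset V :=
  Finset.univ.filter (fun v => ∃ e ∈ F, v ∈ e)

/-- The set of endpoints of a single edge. -/
def eset (e : Sym2 V) : Finset V := Finset.univ.filter (fun v => v ∈ e)

/-- `mids E F` is mid(F) = V(F) ∩ V(E \ F), relative to the edge set `E`. -/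
def mids (E F : Finset (Sym2 V)) : Finset V := Vs F ∩ Vs (E \ F)

/-- `dd E F` is d(F) = |mid(F)|, relative to the edge set `E`. -/
def dd (E F : Finset (Sym2 V)) : ℕ := (mids E F).card

/-- A layout of the edge set `E`: a duplicate-free list enumerating `E`
(equivalently, a bijection {1,…,m} → E). -/
def IsLayout (E : Finset (Sym2 V)) (L : List (Sym2 V)) : Prop :=
  L.Nodup ∧ L.toFinset = E

/-- The (partial) layout `L` has width at most `k` w.r.t. the edge set `E`:
every prefix `π_{≤ i}` satisfies d(π_{≤ i}) ≤ k. -/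
def WidthLE (E : Finset (Sym2 V)) (L : List (Sym2 V)) (k : ℕ) : Prop :=
  ∀ i, dd E (L.take i).toFinset ≤ k

/-- The linearwidth of the edge set `E`: the minimum width of a layout of `E`. -/
noncomputable def lw (E : Finset (Sym2 V)) : ℕ :=
  sInf {k | ∃ L, IsLayout E L ∧ WidthLE E L k}

/-- The number of edges of `S` incident to `u`. -/
def degIn (S : Finset (Sym2 V)) (u : V) : ℕ := (S.filter (fun e => u ∈ e)).card

/-- `X` is a path decomposition of `G`, given as a list of bags. -/
def IsPD (G : SimpleGraph V) (X : List (Finset V)) : Prop :=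
  (∀ v : V, ∃ B ∈ X, v ∈ B) ∧
  (∀ e ∈ G.edgeSet, ∃ B ∈ X, eset e ⊆ B) ∧
  (∀ v : V, ∀ i j l : ℕ, i ≤ j → j ≤ l → l < X.length →
    v ∈ X.getD i ∅ → v ∈ X.getD l ∅ → v ∈ X.getD j ∅)

/-- The pathwidth of `G`: the minimum over path decompositions of (max bag size) − 1. -/
noncomputable def pw (G : SimpleGraph V) : ℕ :=
  sInf {k | ∃ X, IsPD G X ∧ ∀ B ∈ X, B.card ≤ k + 1}

/-- The closure F* of `F` in `E`: all edges of `E` with both endpoints in `V(F)`. -/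
def cl (E F : Finset (Sym2 V)) : Finset (Sym2 V) := E.filter (fun e => eset e ⊆ Vs F)

/-- A partial layout `S` is `k`-extendable: it is a prefix of some layout
of `E` of width at most `k`. -/
def Extendable (E : Finset (Sym2 V)) (k : ℕ) (S : List (Sym2 V)) : Prop :=
  ∃ L, IsLayout E L ∧ WidthLE E L k ∧ S <+: L

/-! With `F = π_{≤ i-1}` and `e = π(i)`, the bag `mid(F) ∪ V(e)` has at most `d(F) + 1` vertices
unless both ends of `e` lie outside `mid(F)`. In that case `mid(F) ⊆ mid(F + e)`, and since `G` is
connected with a vertex off `e`, some end of `e` carries an edge outside `F + e`, so it is a new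
vertex of `mid(F + e)`: hence `d(F) + 1 ≤ d(F + e) ≤ k` and the bag has at most `k + 1` vertices. -/

lemma List.toFinset_take_add_one {α : Type*} [DecidableEq α] {L : List α} {i : ℕ}
    (hi : i < L.length) : (L.take (i + 1)).toFinset = insert L[i] (L.take i).toFinset := by
  rw [List.take_add_one, List.getElem?_eq_getElem hi, List.toFinset_append]
  simp

lemma List.Nodup.getElem_notMem_take {α : Type*} {L : List α} (hL : L.Nodup) {i : ℕ}
    (hi : i < L.length) : L[i] ∉ L.take i := by
  rw [List.mem_take_iff_getElem]
  rintro ⟨j, hj, hji⟩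
  have := hL.getElem_inj_iff.mp hji
  omega

lemma mem_Vs {F : Finset (Sym2 V)} {v : V} : v ∈ Vs F ↔ ∃ e ∈ F, v ∈ e := by
  simp [Vs]

lemma mem_eset {e : Sym2 V} {v : V} : v ∈ eset e ↔ v ∈ e := by
  simp [eset]

lemma card_eset_le_two (e : Sym2 V) : (eset e).card ≤ 2 := by
  induction e using Sym2.ind with
  | _ u v =>
    have : eset s(u, v) = {u, v} := by ext; simp [mem_eset]
    exact this ▸ Finset.card_le_two

lemma exists_notMem_of_three_le_card (e : Sym2 V) (h3 : 3 ≤ Fintype.card V) : ∃ w, w ∉ e := by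
  by_contra! h
  have : Finset.univ ⊆ eset e := fun w _ => mem_eset.mpr (h w)
  have := (Finset.card_le_card this).trans (card_eset_le_two e)
  rw [Finset.card_univ] at this
  omega

lemma mids_sdiff_eset_subset_mids_insert (E F : Finset (Sym2 V)) (e : Sym2 V) :
    mids E F \ eset e ⊆ mids E (insert e F) := by
  intro w hw
  simp only [mids, Finset.mem_sdiff, Finset.mem_inter, mem_Vs, mem_eset] at hw ⊢
  obtain ⟨⟨⟨f, hfF, hwf⟩, ⟨g, ⟨hgE, hgF⟩, hwg⟩⟩, hwe⟩ := hw
  refine ⟨⟨f, Finset.mem_insert_of_mem hfF, hwf⟩, g, ⟨hgE, ?_⟩, hwg⟩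
  rw [Finset.mem_insert, not_or]
  exact ⟨fun hge => hwe (hge ▸ hwg), hgF⟩

lemma eq_of_mem_of_notMem_mids {E F : Finset (Sym2 V)} {e : Sym2 V} (he : e ∈ E) (heF : e ∉ F)
    {u : V} (hu : u ∈ e) (huF : u ∉ mids E F) (huF' : u ∉ mids E (insert e F))
    {f : Sym2 V} (hf : f ∈ E) (huf : u ∈ f) : f = e := by
  by_contra hfe
  by_cases hfF : f ∈ F
  · exact huF (Finset.mem_inter.mpr
      ⟨mem_Vs.mpr ⟨f, hfF, huf⟩, mem_Vs.mpr ⟨e, Finset.mem_sdiff.mpr ⟨he, heF⟩, hu⟩⟩)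
  · refine huF' (Finset.mem_inter.mpr
      ⟨mem_Vs.mpr ⟨e, Finset.mem_insert_self e F, hu⟩, mem_Vs.mpr ⟨f, ?_, huf⟩⟩)
    rw [Finset.mem_sdiff, Finset.mem_insert, not_or]
    exact ⟨hf, hfe, hfF⟩

omit [Fintype V] [DecidableEq V] in
lemma SimpleGraph.Connected.exists_adj_of_mem_of_notMem {G : SimpleGraph V} (hG : G.Connected)
    {S : Set V} {x y : V} (hx : x ∈ S) (hy : y ∉ S) : ∃ a ∈ S, ∃ b ∉ S, G.Adj a b := by
  obtain ⟨p⟩ := hG.preconnected x y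
  obtain ⟨d, -, hd⟩ := p.exists_boundary_dart S hx hy
  exact ⟨_, hd.1, _, hd.2, d.adj⟩

lemma exists_mem_mids_insert (G : SimpleGraph V) [DecidableRel G.Adj] (hG : G.Connected)
    (h3 : 3 ≤ Fintype.card V) {F : Finset (Sym2 V)} {e : Sym2 V} (he : e ∈ G.edgeFinset)
    (heF : e ∉ F) (hdisj : Disjoint (eset e) (mids G.edgeFinset F)) :
    ∃ u ∈ e, u ∈ mids G.edgeFinset (insert e F) := by
  by_contra! h
  obtain ⟨w, hw⟩ := exists_notMem_of_three_le_card e h3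
  obtain ⟨a, ha, b, hb, hab⟩ :=
    hG.exists_adj_of_mem_of_notMem (S := {v | v ∈ e}) (Sym2.out_fst_mem e) hw
  have hab_eq : s(a, b) = e :=
    eq_of_mem_of_notMem_mids he heF ha (Finset.disjoint_left.mp hdisj (mem_eset.mpr ha))
      (h a ha) (G.mem_edgeFinset.mpr hab) (Sym2.mem_mk_left a b)
  exact hb (hab_eq ▸ Sym2.mem_mk_right a b)

lemma card_mids_union_eset_le (G : SimpleGraph V) [DecidableRel G.Adj] (hG : G.Connected)
    (h3 : 3 ≤ Fintype.card V) {F : Finset (Sym2 V)} {e : Sym2 V} (he : e ∈ G.edgeFinset)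
    (heF : e ∉ F) {k : ℕ} (hF : dd G.edgeFinset F ≤ k) (hF' : dd G.edgeFinset (insert e F) ≤ k) :
    (mids G.edgeFinset F ∪ eset e).card ≤ k + 1 := by
  unfold dd at hF hF'
  set M := mids G.edgeFinset F
  have hunion := Finset.card_union_add_card_inter M (eset e)
  have htwo := card_eset_le_two e
  by_cases hdisj : Disjoint (eset e) M
  · obtain ⟨u, hue, huM'⟩ := exists_mem_mids_insert G hG h3 he heF hdisj
    have huM : u ∉ M := Finset.disjoint_left.mp hdisj (mem_eset.mpr hue)
    have hMM' : M ⊆ mids G.edgeFinset (insert e F) :=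
      (Finset.sdiff_eq_self_of_disjoint hdisj.symm).symm.subset.trans
        (mids_sdiff_eset_subset_mids_insert G.edgeFinset F e)
    have hgrow := Finset.card_le_card (Finset.insert_subset huM' hMM')
    rw [Finset.card_insert_of_notMem huM] at hgrow
    omega
  · have : 0 < (M ∩ eset e).card :=
      Finset.card_pos.mpr (Finset.not_disjoint_iff_nonempty_inter.mp (disjoint_comm.not.mp hdisj))
    omega

/-- For connected G that is neither a single vertex nor a single edge
(equivalently, at least 3 vertices), every bag X_i = mid(π_{≤ i−1}) ∪ endpoints(π(i))
of a width-≤-k layout has size at most k + 1. -/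
theorem stmt9 (G : SimpleGraph V) [DecidableRel G.Adj] (hG : G.Connected)
    (h3 : 3 ≤ Fintype.card V) (k : ℕ) (L : List (Sym2 V))
    (hL : IsLayout G.edgeFinset L) (hw : WidthLE G.edgeFinset L k) :
    ∀ i : Fin L.length,
      (mids G.edgeFinset (L.take i).toFinset ∪ eset (L.get i)).card ≤ k + 1 := by
  intro i
  have he : L[i] ∈ G.edgeFinset := hL.2 ▸ List.mem_toFinset.mpr (List.getElem_mem i.isLt)
  have heF : L[i] ∉ (L.take i).toFinset :=
    List.mem_toFinset.not.mpr (hL.1.getElem_notMem_take i.isLt)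
  have hF' := hw (i + 1)
  rw [List.toFinset_take_add_one i.isLt] at hF'
  exact card_mids_union_eset_le G hG h3 he heF (hw i) hF'
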